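/- arXiv:2508.01466 — 2 statements merged into one kernel-verified Lean document; each statement's English description precedes it below -/
import Mathlib

section
/- Let g(u) = f*(Aᵀu) where f : R^n → R ∪ {∞} is proper closed convex, A : R^n → R^m linear, and ri(dom f*) ∩ range(Aᵀ) ≠ ∅. Then v = prox_{αg}(u) if and only if there exists x ∈ argmin_y { f(y) − ⟨u, Ay⟩ + (α/2)‖Ay‖² } such that v = u − αAx. -/
/-!
The prox inequality says that `α⁻¹ (u - v)` is a subgradient of `g = f* ∘ Aᵀ` at `v`, and the
minimality of `x` says that `Aᵀ (u - α A x)` is a subgradient of `f` at `x`: both are first-order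
conditions for a convex function plus a smooth convex quadratic. The two are linked by the chain
rule `∂(f* ∘ Aᵀ)(v) = A ∂f*(Aᵀ v)` and by the inversion rule `x ∈ ∂f*(p) ↔ p ∈ ∂f(x)`. The
inclusion `⊆` in the chain rule is where the relative interior condition enters: a subgradient of
`f*` restricted to `range Aᵀ` extends to all of the space by separating the epigraph of `f*` from
an affine set inside the affine hull of `dom f*`. The inversion rule needs `f** = f`, which is
where closedness of `f` enters, through the separation of a point from the closed epigraph.
-/

open scoped RealInnerProductSpace

/-- Fenchel conjugate of an extended-real-valued function. -/
noncomputable def fenchelConj {n : ℕ} (f : EuclideanSpace ℝ (Fin n) → EReal)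
    (y : EuclideanSpace ℝ (Fin n)) : EReal :=
  ⨆ x : EuclideanSpace ℝ (Fin n), ((⟪y, x⟫ : ℝ) : EReal) - f x

open Set Filter

theorem EReal.coe_le_of_le_toReal {x : EReal} {r : ℝ} (hx : x ≠ ⊥) (h : x ≠ ⊤ → r ≤ x.toReal) :
    (r : EReal) ≤ x := by
  rcases eq_or_ne x ⊤ with rfl | hx'
  · exact le_top
  · exact (EReal.coe_le_coe_iff.2 (h hx')).trans (EReal.coe_toReal_le hx)

section Convexity

variable {V W : Type*} [AddCommGroup V] [Module ℝ V] [AddCommGroup W] [Module ℝ W]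

def ERealConvex (h : V → EReal) : Prop :=
  ∀ x y : V, ∀ t : ℝ, 0 ≤ t → t ≤ 1 →
    h (t • x + (1 - t) • y) ≤ (t : EReal) * h x + ((1 - t : ℝ) : EReal) * h y

theorem ERealConvex.comp_affineMap {h : W → EReal} (hh : ERealConvex h) (φ : V →ᵃ[ℝ] W) :
    ERealConvex (h ∘ φ) := fun x y t ht₀ ht₁ => by
  simpa [Convex.combo_affine_apply (add_sub_cancel t 1)] using hh (φ x) (φ y) t ht₀ ht₁

theorem ERealConvex.comp_linearMap {h : W → EReal} (hh : ERealConvex h) (T : V →ₗ[ℝ] W) :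
    ERealConvex fun x => h (T x) :=
  hh.comp_affineMap T.toAffineMap

theorem ERealConvex.iSup {ι : Sort*} {h : ι → V → EReal} (hh : ∀ i, ERealConvex (h i)) :
    ERealConvex fun x => ⨆ i, h i x := fun x y t ht₀ ht₁ =>
  iSup_le fun i => (hh i x y t ht₀ ht₁).trans <|
    add_le_add (mul_le_mul_of_nonneg_left (le_iSup (h · x) i) (by exact_mod_cast ht₀))
      (mul_le_mul_of_nonneg_left (le_iSup (h · y) i) (by exact_mod_cast sub_nonneg.2 ht₁))

theorem ERealConvex.convexOn_toReal {h : V → EReal} (hh : ERealConvex h) (hnb : ∀ x, h x ≠ ⊥) :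
    ConvexOn ℝ {x | h x ≠ ⊤} fun x => (h x).toReal := by
  have key : ∀ x ∈ {x | h x ≠ ⊤}, ∀ y ∈ {x | h x ≠ ⊤}, ∀ t : ℝ, 0 ≤ t → t ≤ 1 →
      h (t • x + (1 - t) • y) ≤ ((t * (h x).toReal + (1 - t) * (h y).toReal : ℝ) : EReal) := by
    intro x hx y hy t ht₀ ht₁
    have := hh x y t ht₀ ht₁
    rwa [← EReal.coe_toReal hx (hnb x), ← EReal.coe_toReal hy (hnb y)] at this
  refine ⟨fun x hx y hy s t hs ht hst => ?_, fun x hx y hy s t hs ht hst => ?_⟩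
  · obtain rfl : t = 1 - s := by linarith
    exact ne_top_of_le_ne_top (EReal.coe_ne_top _) (key x hx y hy s hs (by linarith))
  · obtain rfl : t = 1 - s := by linarith
    have := EReal.toReal_le_toReal (key x hx y hy s hs (by linarith)) (hnb _) (EReal.coe_ne_top _)
    rwa [EReal.toReal_coe] at this

theorem ERealConvex.convex_epigraph {h : V → EReal} (hh : ERealConvex h) (hnb : ∀ x, h x ≠ ⊥) :
    Convex ℝ {q : V × ℝ | h q.1 ≤ q.2} := by
  convert (hh.convexOn_toReal hnb).convex_epigraph using 1
  ext ⟨x, t⟩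
  refine ⟨fun hx => ⟨ne_top_of_le_ne_top (EReal.coe_ne_top _) hx, ?_⟩, fun ⟨hx, hxt⟩ => ?_⟩
  · simpa using EReal.toReal_le_toReal hx (hnb x) (EReal.coe_ne_top _)
  · exact (EReal.le_coe_toReal hx).trans (by exact_mod_cast hxt)

end Convexity

section Epigraph

open Topology

theorem lt_of_mem_interior_epigraph {V : Type*} [TopologicalSpace V] {h : V → EReal} {x : V}
    {t : ℝ} (hx : (x, t) ∈ interior {q : V × ℝ | h q.1 ≤ q.2}) : h x < t := by
  have hev : ∀ᶠ s : ℝ in 𝓝 t, h x ≤ s :=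
    (continuous_const.prodMk continuous_id).continuousAt.preimage_mem_nhds
      (mem_interior_iff_mem_nhds.1 hx)
  obtain ⟨s, hs, hst⟩ := ((hev.filter_mono nhdsWithin_le_nhds).and self_mem_nhdsWithin).exists
    (f := 𝓝[<] t)
  exact hs.trans_lt (EReal.coe_lt_coe_iff.2 hst)

theorem ERealConvex.mem_interior_epigraph {V : Type*} [NormedAddCommGroup V] [NormedSpace ℝ V]
    [FiniteDimensional ℝ V] {h : V → EReal} (hh : ERealConvex h) (hnb : ∀ x, h x ≠ ⊥) {x : V}
    (hx : x ∈ interior {z | h z ≠ ⊤}) {t : ℝ} (ht : h x < t) :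
    (x, t) ∈ interior {q : V × ℝ | h q.1 ≤ q.2} := by
  have hcont := (hh.convexOn_toReal hnb).continuousOn_interior
  have hxt : (h x).toReal < t := by
    rwa [← EReal.coe_toReal (interior_subset hx) (hnb x), EReal.coe_lt_coe_iff] at ht
  obtain ⟨m, hxm, hmt⟩ := exists_between hxt
  have hU : IsOpen (interior {z | h z ≠ ⊤} ∩ (fun z => (h z).toReal) ⁻¹' Iio m) :=
    hcont.isOpen_inter_preimage isOpen_interior isOpen_Iio
  refine mem_interior.2 ⟨_ ×ˢ Ioi m, ?_, hU.prod isOpen_Ioi, ⟨hx, hxm⟩, hmt⟩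
  rintro ⟨z, s⟩ ⟨⟨hz, hzm⟩, hs⟩
  exact (EReal.le_coe_toReal (interior_subset hz)).trans
    (EReal.coe_le_coe_iff.2 (hzm.out.trans hs.out).le)

theorem Convex.le_of_forall_mem_interior_lt {X : Type*} [NormedAddCommGroup X] [NormedSpace ℝ X]
    {s : Set X} (hs : Convex ℝ s) (hne : (interior s).Nonempty) {φ : X → ℝ} (hφ : Continuous φ)
    {u : ℝ} (hlt : ∀ q ∈ interior s, φ q < u) {q : X} (hq : q ∈ s) : φ q ≤ u := by
  refine closure_minimal (fun q hq => (hlt q hq).le) (isClosed_le hφ continuous_const) ?_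
  rw [hs.closure_interior_eq_closure_of_nonempty_interior hne]
  exact subset_closure hq

end Epigraph

section Subgradient

variable {V W : Type*} [NormedAddCommGroup V] [InnerProductSpace ℝ V] [NormedAddCommGroup W]
  [InnerProductSpace ℝ W]

def HasSubgradientAt (h : V → EReal) (c x : V) : Prop :=
  ∀ z, h x + ((⟪c, z - x⟫ : ℝ) : EReal) ≤ h z

theorem HasSubgradientAt.ne_top {h : V → EReal} {c x z : V} (hc : HasSubgradientAt h c x)
    (hz : h z ≠ ⊤) : h x ≠ ⊤ := fun hx =>
  hz <| top_le_iff.1 <| by simpa [hx] using hc z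

theorem HasSubgradientAt.comp_continuousLinearMap [CompleteSpace V] [CompleteSpace W]
    {h : V → EReal} {T : W →L[ℝ] V} {x : V} {w : W} (hx : HasSubgradientAt h x (T w)) :
    HasSubgradientAt (fun w => h (T w)) (T.adjoint x) w := fun w' => by
  simpa [ContinuousLinearMap.adjoint_inner_left, map_sub] using hx (T w')

theorem ERealConvex.isMinOn_add_iff [CompleteSpace V] {h : V → EReal} (hh : ERealConvex h)
    {q : V → ℝ} {c x : V} (hq : HasGradientAt q c x) (hq_le : ∀ z, q x + ⟪c, z - x⟫ ≤ q z) :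
    IsMinOn (fun z => h z + q z) univ x ↔ HasSubgradientAt h (-c) x := by
  rw [isMinOn_univ_iff]
  refine ⟨fun hmin z => ?_, fun hc z => ?_⟩
  · rcases eq_or_ne (h z) ⊤ with hz | hz
    · simp [hz]
    rcases eq_or_ne (h x) ⊥ with hx | hx
    · simp [hx]
    have hxt : h x ≠ ⊤ := fun hx' =>
      EReal.add_ne_top hz (EReal.coe_ne_top _) (top_le_iff.1 (by simpa [hx'] using hmin z))
    have hzb : h z ≠ ⊥ := fun hz' => hx <| by simpa [hz'] using hmin z
    obtain ⟨a, ha⟩ : ∃ a : ℝ, h x = a := ⟨_, (EReal.coe_toReal hxt hx).symm⟩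
    obtain ⟨b, hb⟩ : ∃ b : ℝ, h z = b := ⟨_, (EReal.coe_toReal hz hzb).symm⟩
    -- along the segment from `x` to `z`, convexity of `h` bounds the decrease of `q` by `t (b - a)`
    have hslope : ∀ t ∈ Ioc (0 : ℝ) 1, a - b ≤ t⁻¹ • (q (x + t • (z - x)) - q x) := by
      rintro t ⟨ht₀, ht₁⟩
      have hconv := hh z x t ht₀.le ht₁
      rw [show t • z + (1 - t) • x = x + t • (z - x) by module, ha, hb] at hconv
      have hle : ((a + q x : ℝ) : EReal) ≤
          ((t * b + (1 - t) * a + q (x + t • (z - x)) : ℝ) : EReal) :=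
        calc ((a + q x : ℝ) : EReal) = h x + q x := by rw [ha, EReal.coe_add]
          _ ≤ _ := hmin _
          _ ≤ _ := add_le_add_left (hconv.trans_eq (by norm_cast)) _
      rw [smul_eq_mul, le_inv_mul_iff₀ ht₀]
      linarith [EReal.coe_le_coe_iff.1 hle]
    have hab : a - b ≤ ⟪c, z - x⟫ := by
      simpa using ge_of_tendsto (hq.hasFDerivAt.hasLineDerivAt (z - x)).tendsto_slope_zero_right
        (eventually_of_mem (Ioc_mem_nhdsGT one_pos) hslope)
    rw [ha, hb, inner_neg_left, ← EReal.coe_add, EReal.coe_le_coe_iff]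
    linarith
  · calc h x + q x = h x + ((⟪-c, z - x⟫ : ℝ) : EReal) + ((q x + ⟪c, z - x⟫ : ℝ) : EReal) := by
          rw [add_assoc, ← EReal.coe_add, inner_neg_left]
          ring_nf
      _ ≤ h z + q z := add_le_add (hc z) (EReal.coe_le_coe_iff.2 (hq_le z))

end Subgradient

section Quadratic

variable {V W : Type*} [NormedAddCommGroup V] [InnerProductSpace ℝ V] [NormedAddCommGroup W]
  [InnerProductSpace ℝ W]

theorem hasGradientAt_const_mul_norm_sub_sq [CompleteSpace V] (c : ℝ) (u x : V) :
    HasGradientAt (fun w => c * ‖w - u‖ ^ 2) ((2 * c) • (x - u)) x := by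
  rw [hasGradientAt_iff_hasFDerivAt]
  refine ((((hasFDerivAt_id x).sub_const u).norm_sq).const_mul c).congr_fderiv ?_
  ext w
  simp
  ring

theorem const_mul_norm_sub_sq_add_inner_le {c : ℝ} (hc : 0 ≤ c) (u x z : V) :
    c * ‖x - u‖ ^ 2 + ⟪(2 * c) • (x - u), z - x⟫ ≤ c * ‖z - u‖ ^ 2 := by
  rw [show z - u = (x - u) + (z - x) by abel, norm_add_sq_real, real_inner_smul_left]
  nlinarith [mul_nonneg hc (sq_nonneg ‖z - x‖)]

theorem hasGradientAt_half_mul_norm_sq_sub_inner [CompleteSpace V] [CompleteSpace W] (α : ℝ)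
    (A : V →L[ℝ] W) (u : W) (x : V) :
    HasGradientAt (fun y => α / 2 * ‖A y‖ ^ 2 - ⟪u, A y⟫) (A.adjoint (α • A x - u)) x := by
  rw [hasGradientAt_iff_hasFDerivAt]
  refine (((A.hasFDerivAt.norm_sq).const_mul (α / 2)).sub
    ((hasFDerivAt_const u x).inner ℝ A.hasFDerivAt)).congr_fderiv ?_
  ext w
  simp [ContinuousLinearMap.adjoint_inner_left]
  ring

theorem half_mul_norm_sq_sub_inner_add_inner_le [CompleteSpace V] [CompleteSpace W] {α : ℝ}
    (hα : 0 ≤ α) (A : V →L[ℝ] W) (u : W) (x z : V) :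
    α / 2 * ‖A x‖ ^ 2 - ⟪u, A x⟫ + ⟪A.adjoint (α • A x - u), z - x⟫ ≤
      α / 2 * ‖A z‖ ^ 2 - ⟪u, A z⟫ := by
  obtain ⟨d, rfl⟩ : ∃ d, z = x + d := ⟨z - x, by abel⟩
  rw [add_sub_cancel_left, ContinuousLinearMap.adjoint_inner_left, map_add, norm_add_sq_real,
    inner_add_right, inner_sub_left, real_inner_smul_left]
  nlinarith [mul_nonneg hα (sq_nonneg ‖A d‖)]

theorem ERealConvex.forall_add_norm_sub_sq_le_iff [CompleteSpace V] {g : V → EReal}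
    (hg : ERealConvex g) {α : ℝ} (hα : 0 < α) (u v : V) :
    (∀ w, g v + ((1 / (2 * α) * ‖v - u‖ ^ 2 : ℝ) : EReal) ≤
        g w + ((1 / (2 * α) * ‖w - u‖ ^ 2 : ℝ) : EReal)) ↔
      HasSubgradientAt g (α⁻¹ • (u - v)) v := by
  rw [show α⁻¹ • (u - v) = -((2 * (1 / (2 * α))) • (v - u)) by
    rw [← smul_neg, neg_sub]; congr 1; field_simp]
  exact isMinOn_univ_iff.symm.trans (hg.isMinOn_add_iff (hasGradientAt_const_mul_norm_sub_sq _ u v)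
    (const_mul_norm_sub_sq_add_inner_le (by positivity) u v))

theorem ERealConvex.forall_sub_inner_add_norm_sq_le_iff [CompleteSpace V] [CompleteSpace W]
    {f : V → EReal} (hf : ERealConvex f) {α : ℝ} (hα : 0 ≤ α) (A : V →L[ℝ] W) (u : W) (x : V) :
    (∀ y, f x - ((⟪u, A x⟫ : ℝ) : EReal) + ((α / 2 * ‖A x‖ ^ 2 : ℝ) : EReal) ≤
        f y - ((⟪u, A y⟫ : ℝ) : EReal) + ((α / 2 * ‖A y‖ ^ 2 : ℝ) : EReal)) ↔
      HasSubgradientAt f (A.adjoint (u - α • A x)) x := by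
  have hobj : ∀ y, f y - ((⟪u, A y⟫ : ℝ) : EReal) + ((α / 2 * ‖A y‖ ^ 2 : ℝ) : EReal) =
      f y + ((α / 2 * ‖A y‖ ^ 2 - ⟪u, A y⟫ : ℝ) : EReal) := fun y => by
    rw [sub_eq_add_neg, add_assoc, ← EReal.coe_neg, ← EReal.coe_add, neg_add_eq_sub]
  simp_rw [hobj]
  rw [← neg_sub (α • A x) u, map_neg]
  exact isMinOn_univ_iff.symm.trans (hf.isMinOn_add_iff
    (hasGradientAt_half_mul_norm_sq_sub_inner α A u x)
    (half_mul_norm_sq_sub_inner_add_inner_le hα A u x))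

end Quadratic

section Separation

variable {V : Type*} [NormedAddCommGroup V] [InnerProductSpace ℝ V] [CompleteSpace V]

theorem exists_inner_add_mul_eq (φ : StrongDual ℝ (V × ℝ)) :
    ∃ (a : V) (β : ℝ), ∀ w t, φ (w, t) = ⟪a, w⟫ + β * t := by
  refine ⟨(InnerProductSpace.toDual ℝ V).symm (φ.comp (.inl ℝ V ℝ)), φ (0, 1), fun w t => ?_⟩
  rw [InnerProductSpace.toDual_symm_apply, show (w, t) = (w, 0) + t • (0, 1) by simp, map_add,
    map_smul, smul_eq_mul, mul_comm]
  rfl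

theorem ERealConvex.exists_inner_add_mul_lt_of_lt {h : V → EReal} (hh : ERealConvex h)
    (hnb : ∀ x, h x ≠ ⊥) (hlsc : LowerSemicontinuous h) {x : V} {r : ℝ} (hr : (r : EReal) < h x) :
    ∃ (a : V) (β u : ℝ), ⟪a, x⟫ + β * r < u ∧ ∀ z (t : ℝ), h z ≤ t → u < ⟪a, z⟫ + β * t := by
  have hclosed : IsClosed {q : V × ℝ | h q.1 ≤ q.2} := hlsc.isClosed_epigraph.preimage
    (continuous_fst.prodMk (continuous_coe_real_ereal.comp continuous_snd))
  obtain ⟨φ, u, hφx, hφepi⟩ :=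
    geometric_hahn_banach_point_closed (hh.convex_epigraph hnb) hclosed (x := (x, r)) (not_le.2 hr)
  obtain ⟨a, β, hφ⟩ := exists_inner_add_mul_eq φ
  exact ⟨a, β, u, hφ x r ▸ hφx, fun z t hzt => hφ z t ▸ hφepi (z, t) hzt⟩

theorem ERealConvex.exists_affine_minorant_gt {h : V → EReal} (hh : ERealConvex h)
    (hnb : ∀ x, h x ≠ ⊥) (hlsc : LowerSemicontinuous h) {s₀ : V} {k₀ : ℝ}
    (h₀ : ∀ z, ((⟪s₀, z⟫ + k₀ : ℝ) : EReal) ≤ h z) {x : V} {r : ℝ} (hr : (r : EReal) < h x) :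
    ∃ (s : V) (k : ℝ), (∀ z, ((⟪s, z⟫ + k : ℝ) : EReal) ≤ h z) ∧ r < ⟪s, x⟫ + k := by
  by_cases hdom : ∀ z, h z = ⊤
  · exact ⟨s₀, r - ⟪s₀, x⟫ + 1, fun z => by simp [hdom z], by linarith⟩
  obtain ⟨z₀, hz₀⟩ := not_forall.1 hdom
  obtain ⟨a, β, u, hx, hsep⟩ := hh.exists_inner_add_mul_lt_of_lt hnb hlsc hr
  have hsep' : ∀ z, h z ≠ ⊤ → u < ⟪a, z⟫ + β * (h z).toReal := fun z hz =>
    hsep z _ (EReal.le_coe_toReal hz)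
  have hβ : 0 ≤ β := by
    by_contra! hβ
    have h₁ := hsep z₀ _ ((EReal.le_coe_toReal hz₀).trans
      (EReal.coe_le_coe_iff.2 (le_max_left _ ((⟪a, z₀⟫ - u) / -β))))
    have h₂ := mul_le_mul_of_nonpos_left (le_max_right (h z₀).toReal ((⟪a, z₀⟫ - u) / -β)) hβ.le
    rw [div_neg, mul_neg, mul_div_cancel₀ _ hβ.ne] at h₂
    linarith
  rcases hβ.eq_or_lt with rfl | hβ
  · -- a vertical hyperplane: tilt the given minorant by a large multiple of `u - ⟪a, ·⟫`
    simp only [zero_mul, add_zero] at hx hsep'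
    set lam := (|r - ⟪s₀, x⟫ - k₀| + 1) / (u - ⟪a, x⟫)
    have hlam₀ : 0 ≤ lam := div_nonneg (by positivity) (by linarith)
    have hlam : lam * (u - ⟪a, x⟫) = |r - ⟪s₀, x⟫ - k₀| + 1 := div_mul_cancel₀ _ (by linarith)
    refine ⟨s₀ - lam • a, k₀ + lam * u,
      fun z => EReal.coe_le_of_le_toReal (hnb z) fun hz => ?_, ?_⟩
    · have h₁ := EReal.toReal_le_toReal (h₀ z) (EReal.coe_ne_bot _) hz
      rw [EReal.toReal_coe] at h₁
      rw [inner_sub_left, real_inner_smul_left]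
      linarith [mul_le_mul_of_nonneg_left (hsep' z hz).le hlam₀]
    · rw [inner_sub_left, real_inner_smul_left]
      linarith [le_abs_self (r - ⟪s₀, x⟫ - k₀)]
  · refine ⟨-β⁻¹ • a, β⁻¹ * u, fun z => EReal.coe_le_of_le_toReal (hnb z) fun hz => ?_, ?_⟩
    · rw [real_inner_smul_left, neg_mul, ← sub_eq_neg_add, ← mul_sub, inv_mul_le_iff₀ hβ]
      linarith [hsep' z hz]
    · rw [real_inner_smul_left, neg_mul, ← sub_eq_neg_add, ← mul_sub, lt_inv_mul_iff₀ hβ]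
      linarith

end Separation

section Extension

variable {V : Type*} [NormedAddCommGroup V] [InnerProductSpace ℝ V]

theorem Submodule.mem_orthogonal_of_forall_le_inner {K : Submodule ℝ V} {c : V} {u : ℝ}
    (h : ∀ k ∈ K, u ≤ ⟪c, k⟫) : c ∈ Kᗮ := by
  refine (K.mem_orthogonal' c).2 fun k hk => by_contra fun hne => ?_
  have := h (((u - 1) / ⟪c, k⟫) • k) (K.smul_mem _ hk)
  rw [real_inner_smul_right, div_mul_cancel₀ _ hne] at this
  linarith

theorem Submodule.exists_mem_orthogonal_inner_eq [FiniteDimensional ℝ V] {S W : Submodule ℝ V}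
    {c₁ : V} (hc₁ : c₁ ∈ (S ⊓ W)ᗮ) : ∃ c ∈ Sᗮ, ∀ w ∈ W, ⟪c, w⟫ = ⟪c₁, w⟫ := by
  have : (S ⊓ W)ᗮ = Sᗮ ⊔ Wᗮ := by
    rw [← (Sᗮ ⊔ Wᗮ).orthogonal_orthogonal, ← inf_orthogonal, S.orthogonal_orthogonal,
      W.orthogonal_orthogonal]
  obtain ⟨a, ha, b, hb, rfl⟩ := Submodule.mem_sup.1 (this ▸ hc₁)
  refine ⟨a, ha, fun w hw => ?_⟩
  rw [inner_add_left, (Submodule.mem_orthogonal' W b).1 hb w hw, add_zero]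

theorem Submodule.convex_graph_add_inner (K : Submodule ℝ V) (x₁ p : V) (m : ℝ) :
    Convex ℝ {q : V × ℝ | q.1 ∈ K ∧ q.2 = m + ⟪x₁, q.1 - p⟫} := by
  rintro ⟨k, s⟩ ⟨hk, hs⟩ ⟨k', s'⟩ ⟨hk', hs'⟩ a b - - hab
  refine ⟨K.add_mem (K.smul_mem a hk) (K.smul_mem b hk'), ?_⟩
  obtain rfl : b = 1 - a := by linarith
  simp only [Prod.smul_mk, Prod.mk_add_mk, smul_eq_mul] at hs hs' ⊢
  rw [hs, hs', inner_sub_right, inner_sub_right, inner_sub_right, inner_add_right,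
    real_inner_smul_right, real_inner_smul_right]
  ring

theorem hasSubgradientAt_of_forall_inner_add_mul_le {h : V → EReal} (hnb : ∀ x, h x ≠ ⊥)
    {a p : V} {β m : ℝ} (hβ : β < 0) (hm : h p = m)
    (hsupp : ∀ z, h z ≠ ⊤ → ⟪a, z⟫ + β * (h z).toReal ≤ ⟪a, p⟫ + β * m) :
    HasSubgradientAt h (-β⁻¹ • a) p := fun z => by
  rw [hm, ← EReal.coe_add]
  refine EReal.coe_le_of_le_toReal (hnb z) fun hz => ?_
  have := mul_le_mul_of_nonneg_left (show ⟪a, z - p⟫ ≤ -β * ((h z).toReal - m) by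
    rw [inner_sub_right]; linarith [hsupp z hz]) (neg_nonneg.2 (inv_nonpos.2 hβ.le))
  rw [← mul_assoc, neg_mul_neg, inv_mul_cancel₀ hβ.ne, one_mul] at this
  rw [real_inner_smul_left]
  linarith

variable [FiniteDimensional ℝ V]

theorem ERealConvex.exists_hasSubgradientAt_add_of_mem_interior {h : V → EReal} (hh : ERealConvex h)
    (hnb : ∀ x, h x ≠ ⊥) {K : Submodule ℝ V} {p x₁ k₀ : V} (hp : p ∈ K) (hk₀ : k₀ ∈ K)
    (hk₀int : k₀ ∈ interior {z | h z ≠ ⊤})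
    (hmin : ∀ k ∈ K, h p + ((⟪x₁, k - p⟫ : ℝ) : EReal) ≤ h k) :
    ∃ c ∈ Kᗮ, HasSubgradientAt h (x₁ + c) p := by
  have hpt : h p ≠ ⊤ := fun hp' =>
    interior_subset hk₀int (top_le_iff.1 (by simpa [hp'] using hmin k₀ hk₀))
  obtain ⟨m, hm⟩ : ∃ m : ℝ, h p = m := ⟨_, (EReal.coe_toReal hpt (hnb p)).symm⟩
  obtain ⟨b₀, hb₀⟩ : ∃ b : ℝ, h k₀ = b :=
    ⟨_, (EReal.coe_toReal (interior_subset hk₀int) (hnb k₀)).symm⟩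
  have hint : ∀ t : ℝ, b₀ < t → (k₀, t) ∈ interior {q : V × ℝ | h q.1 ≤ q.2} := fun t ht =>
    hh.mem_interior_epigraph hnb hk₀int (by rw [hb₀]; exact_mod_cast ht)
  -- separate the epigraph from the graph of `h p + ⟪x₁, · - p⟫` over `K`
  have hdisj : Disjoint (interior {q : V × ℝ | h q.1 ≤ q.2})
      {q : V × ℝ | q.1 ∈ K ∧ q.2 = m + ⟪x₁, q.1 - p⟫} :=
    Set.disjoint_left.2 fun q hq ⟨hk, hq₂⟩ => (lt_of_mem_interior_epigraph hq).not_ge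
      (by rw [hq₂, EReal.coe_add, ← hm]; exact hmin _ hk)
  obtain ⟨φ, u, hφint, hφM⟩ :=
    geometric_hahn_banach_open (hh.convex_epigraph hnb).interior isOpen_interior
      (K.convex_graph_add_inner x₁ p m) hdisj
  obtain ⟨a, β, hφ⟩ := exists_inner_add_mul_eq φ
  have hMu : ∀ k ∈ K, u ≤ ⟪a, k⟫ + β * (m + ⟪x₁, k - p⟫) := fun k hk =>
    hφ k _ ▸ hφM (k, _) ⟨hk, rfl⟩
  have hβ : β < 0 := by
    have h₁ := hφ k₀ _ ▸ hφint _ (hint (max b₀ (m + ⟪x₁, k₀ - p⟫) + 1)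
      (by linarith [le_max_left b₀ (m + ⟪x₁, k₀ - p⟫)]))
    nlinarith [hMu k₀ hk₀, le_max_right b₀ (m + ⟪x₁, k₀ - p⟫)]
  refine ⟨-β⁻¹ • (a + β • x₁), Submodule.smul_mem _ _ <|
    Submodule.mem_orthogonal_of_forall_le_inner (u := u - β * (m - ⟪x₁, p⟫)) fun k hk => ?_, ?_⟩
  · have := hMu k hk
    rw [inner_sub_right] at this
    rw [inner_add_left, real_inner_smul_left]
    linarith
  · rw [show x₁ + -β⁻¹ • (a + β • x₁) = -β⁻¹ • a by
      rw [smul_add, smul_smul, neg_mul, inv_mul_cancel₀ hβ.ne, neg_one_smul]; abel]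
    refine hasSubgradientAt_of_forall_inner_add_mul_le hnb hβ hm fun z hz => ?_
    have h₁ := hφ z _ ▸ (hh.convex_epigraph hnb).le_of_forall_mem_interior_lt
      ⟨_, hint _ (lt_add_one b₀)⟩ φ.continuous hφint (q := (z, (h z).toReal))
      (EReal.le_coe_toReal hz)
    have h₂ := hMu p hp
    rw [sub_self, inner_zero_right, add_zero] at h₂
    linarith

end Extension

section Relative

variable {E : Type*} [NormedAddCommGroup E] [InnerProductSpace ℝ E]

open Topology in
theorem add_mem_nhds_zero_of_mem_intrinsicInterior {s : Set E} {x : E}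
    (hx : x ∈ intrinsicInterior ℝ s) :
    {w : (affineSpan ℝ s).direction | x + w ∈ s} ∈ 𝓝 0 := by
  obtain ⟨y, hy, rfl⟩ := mem_intrinsicInterior.1 hx
  obtain ⟨ε, hε, hball⟩ := Metric.isOpen_iff.1 isOpen_interior y hy
  refine Metric.mem_nhds_iff.2 ⟨ε, hε, fun w hw => ?_⟩
  have hmem : (y : E) + w ∈ affineSpan ℝ s := by
    simpa [vadd_eq_add, add_comm] using AffineSubspace.vadd_mem_of_mem_direction w.2 y.2
  have hdist : dist (⟨_, hmem⟩ : affineSpan ℝ s) y < ε := by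
    simpa [Subtype.dist_eq, dist_eq_norm] using hw
  exact interior_subset (s := Subtype.val ⁻¹' s) (hball hdist)

variable [FiniteDimensional ℝ E]

theorem ERealConvex.exists_hasSubgradientAt_add_of_mem_intrinsicInterior {h : E → EReal}
    (hh : ERealConvex h) (hnb : ∀ x, h x ≠ ⊥) {S : Submodule ℝ E} {p x₁ x₀ : E} (hp : p ∈ S)
    (hx₀ : x₀ ∈ S) (hx₀ri : x₀ ∈ intrinsicInterior ℝ {z | h z ≠ ⊤})
    (hmin : ∀ s ∈ S, h p + ((⟪x₁, s - p⟫ : ℝ) : EReal) ≤ h s) :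
    ∃ c ∈ Sᗮ, HasSubgradientAt h (x₁ + c) p := by
  set D := {z | h z ≠ ⊤}
  set W := (affineSpan ℝ D).direction
  have hx₀D : x₀ ∈ D := intrinsicInterior_subset hx₀ri
  have hW : ∀ z ∈ D, z - x₀ ∈ W := fun z hz =>
    AffineSubspace.vsub_mem_direction (subset_affineSpan ℝ D hz) (subset_affineSpan ℝ D hx₀D)
  have hpD : p ∈ D := fun hp' => hx₀D (top_le_iff.1 (by simpa [hp'] using hmin x₀ hx₀))
  -- in `W`, with origin `x₀`, the domain of `h` has nonempty interior
  set H : W → EReal := fun w => h (x₀ + w)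
  have hH : ERealConvex H := hh.comp_affineMap (AffineMap.const ℝ W x₀ + W.subtype.toAffineMap)
  set x₁' : W := W.orthogonalProjectionOnto x₁
  obtain ⟨c', hc'K, hc'⟩ := hH.exists_hasSubgradientAt_add_of_mem_interior (fun w => hnb _)
    (K := S.comap W.subtype) (p := ⟨p - x₀, hW p hpD⟩) (x₁ := x₁') (k₀ := 0)
    (S.sub_mem hp hx₀) (Submodule.zero_mem _)
    (mem_interior_iff_mem_nhds.2 (add_mem_nhds_zero_of_mem_intrinsicInterior hx₀ri))
    (fun k hk => by
      have := hmin (x₀ + k) (S.add_mem hx₀ hk)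
      rw [show x₀ + (k : E) - p = k - (p - x₀) by abel] at this
      simpa [H, x₁'] using this)
  have hc₁ : ((x₁' + c' : W) : E) - x₁ ∈ (S ⊓ W)ᗮ := by
    refine (Submodule.mem_orthogonal _ _).2 fun y ⟨hyS, hyW⟩ => ?_
    have h₁ : ⟪(⟨y, hyW⟩ : W), c'⟫ = 0 := (Submodule.mem_orthogonal _ _).1 hc'K ⟨y, hyW⟩ hyS
    have h₂ : ⟪(⟨y, hyW⟩ : W), x₁'⟫ = ⟪y, x₁⟫ :=
      Submodule.inner_orthogonalProjectionOnto_eq_of_mem_left _ _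
    rw [Submodule.coe_inner] at h₁ h₂
    rw [inner_sub_right, Submodule.coe_add, inner_add_right, h₁, h₂, add_zero, sub_self]
  obtain ⟨c, hcS, hcW⟩ := Submodule.exists_mem_orthogonal_inner_eq hc₁
  refine ⟨c, hcS, fun z => ?_⟩
  rcases eq_or_ne (h z) ⊤ with hz | hz
  · simp [hz]
  have hinner : ⟪x₁ + c, z - p⟫ = ⟪x₁' + c', (⟨z - x₀, hW z hz⟩ : W) - ⟨p - x₀, hW p hpD⟩⟫ := by
    rw [inner_add_left x₁, hcW _ (by simpa using W.sub_mem (hW z hz) (hW p hpD)), ← inner_add_left,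
      add_sub_cancel, Submodule.coe_inner, Submodule.coe_sub, sub_sub_sub_cancel_right]
  simpa [H, ← hinner] using hc' ⟨z - x₀, hW z hz⟩

end Relative

section ChainRule

variable {E F : Type*} [NormedAddCommGroup E] [InnerProductSpace ℝ E] [NormedAddCommGroup F]
  [InnerProductSpace ℝ F] [FiniteDimensional ℝ E] [FiniteDimensional ℝ F]

theorem ERealConvex.exists_hasSubgradientAt_of_hasSubgradientAt_comp {h : E → EReal}
    (hh : ERealConvex h) (hnb : ∀ x, h x ≠ ⊥) {T : F →L[ℝ] E}
    (hri : (intrinsicInterior ℝ {x | h x ≠ ⊤} ∩ Set.range T).Nonempty) {v d : F}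
    (hd : HasSubgradientAt (fun w => h (T w)) d v) :
    ∃ x, HasSubgradientAt h x (T v) ∧ T.adjoint x = d := by
  obtain ⟨_, hri, w₀, rfl⟩ := hri
  obtain ⟨m, hm⟩ : ∃ m : ℝ, h (T v) = m :=
    ⟨_, (EReal.coe_toReal (hd.ne_top (intrinsicInterior_subset hri)) (hnb _)).symm⟩
  -- `h ∘ T` is constant along `ker T`, so its subgradient `d` is orthogonal to `ker T`
  have hker : d ∈ T.kerᗮ := Submodule.mem_orthogonal_of_forall_le_inner (u := 0) fun k hk => by
    have := hd (v - k)
    dsimp only at this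
    rw [map_sub, show T k = 0 from hk, sub_zero, hm, sub_sub_cancel_left,
      inner_neg_right, ← EReal.coe_add, EReal.coe_le_coe_iff] at this
    linarith
  obtain ⟨x₁, rfl⟩ : d ∈ T.adjoint.range := by
    rwa [ContinuousLinearMap.orthogonal_ker,
      (Submodule.closed_of_finiteDimensional _).submodule_topologicalClosure_eq] at hker
  obtain ⟨c, hc, hsub⟩ := hh.exists_hasSubgradientAt_add_of_mem_intrinsicInterior hnb
    (S := T.range) ⟨v, rfl⟩ ⟨w₀, rfl⟩ hri (by
      rintro _ ⟨w, rfl⟩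
      simpa [ContinuousLinearMap.adjoint_inner_left, map_sub] using hd w)
  have hc' : T.adjoint c = 0 := by simpa [T.orthogonal_range] using hc
  exact ⟨x₁ + c, hsub, by simp [hc']⟩

end ChainRule

section FenchelConjugate

variable {n : ℕ} {f : EuclideanSpace ℝ (Fin n) → EReal}

theorem inner_sub_le_fenchelConj (f : EuclideanSpace ℝ (Fin n) → EReal)
    (y x : EuclideanSpace ℝ (Fin n)) : ((⟪y, x⟫ : ℝ) : EReal) - f x ≤ fenchelConj f y :=
  le_iSup (fun x => ((⟪y, x⟫ : ℝ) : EReal) - f x) x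

theorem fenchelConj_ne_bot {x : EuclideanSpace ℝ (Fin n)} (hx : f x ≠ ⊤)
    (y : EuclideanSpace ℝ (Fin n)) : fenchelConj f y ≠ ⊥ := by
  refine ne_bot_of_le_ne_bot ?_ (inner_sub_le_fenchelConj f y x)
  generalize f x = e at hx ⊢
  induction e using EReal.rec <;> simp_all [← EReal.coe_sub]

theorem erealConvex_fenchelConj (hnb : ∀ x, f x ≠ ⊥) : ERealConvex (fenchelConj f) := by
  refine ERealConvex.iSup fun x y₁ y₂ t _ _ => ?_
  rcases eq_or_ne (f x) ⊤ with hx | hx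
  · simp [hx]
  rw [← EReal.coe_toReal hx (hnb x)]
  norm_cast
  rw [inner_add_left, real_inner_smul_left, real_inner_smul_left]
  linarith

theorem fenchelConj_fenchelConj_le (x : EuclideanSpace ℝ (Fin n)) :
    fenchelConj (fenchelConj f) x ≤ f x := by
  refine iSup_le fun y => ?_
  have hy := inner_sub_le_fenchelConj f y x
  generalize f x = e at hy ⊢
  induction e using EReal.rec with
  | bot => simp_all
  | coe a =>
    calc ((⟪x, y⟫ : ℝ) : EReal) - fenchelConj f y
        ≤ ((⟪x, y⟫ : ℝ) : EReal) - ((⟪y, x⟫ - a : ℝ) : EReal) := EReal.sub_le_sub le_rfl hy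
      _ = a := by rw [real_inner_comm, ← EReal.coe_sub, sub_sub_cancel]
  | top => exact le_top

theorem HasSubgradientAt.fenchelConj {s x : EuclideanSpace ℝ (Fin n)} (hs : HasSubgradientAt f s x)
    (hx : f x ≠ ⊤) (hx' : f x ≠ ⊥) : HasSubgradientAt (_root_.fenchelConj f) x s := by
  obtain ⟨a, ha⟩ : ∃ a : ℝ, f x = a := ⟨_, (EReal.coe_toReal hx hx').symm⟩
  have hconj : _root_.fenchelConj f s ≤ ((⟪s, x⟫ - a : ℝ) : EReal) := iSup_le fun z => by
    have hz := hs z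
    rw [ha, ← EReal.coe_add] at hz
    calc ((⟪s, z⟫ : ℝ) : EReal) - f z ≤ ((⟪s, z⟫ : ℝ) : EReal) - ((a + ⟪s, z - x⟫ : ℝ) : EReal) :=
          EReal.sub_le_sub le_rfl hz
      _ = ((⟪s, x⟫ - a : ℝ) : EReal) := by rw [← EReal.coe_sub, inner_sub_right]; ring_nf
  intro y
  calc _root_.fenchelConj f s + ((⟪x, y - s⟫ : ℝ) : EReal)
      ≤ ((⟪s, x⟫ - a : ℝ) : EReal) + ((⟪x, y - s⟫ : ℝ) : EReal) := add_le_add_left hconj _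
    _ = ((⟪y, x⟫ : ℝ) : EReal) - f x := by
      rw [ha, ← EReal.coe_add, ← EReal.coe_sub, inner_sub_right, real_inner_comm x y,
        real_inner_comm x s]
      ring_nf
    _ ≤ _root_.fenchelConj f y := inner_sub_le_fenchelConj f y x

theorem fenchelConj_le_coe_iff {s : EuclideanSpace ℝ (Fin n)} {k : ℝ} :
    fenchelConj f s ≤ ((-k : ℝ) : EReal) ↔ ∀ z, ((⟪s, z⟫ + k : ℝ) : EReal) ≤ f z := by
  refine iSup_le_iff.trans (forall_congr' fun z => ?_)
  generalize f z = e
  induction e using EReal.rec with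
  | bot => simp
  | coe a => norm_cast; constructor <;> intro <;> linarith
  | top => simp

theorem fenchelConj_fenchelConj (hconv : ERealConvex f) (hnb : ∀ x, f x ≠ ⊥)
    (hlsc : LowerSemicontinuous f) {y₀ : EuclideanSpace ℝ (Fin n)} (hy₀ : fenchelConj f y₀ ≠ ⊤) :
    fenchelConj (fenchelConj f) = f := by
  funext x
  refine (fenchelConj_fenchelConj_le x).antisymm (not_lt.1 fun hlt => ?_)
  obtain ⟨r, hxr, hrf⟩ := EReal.exists_between_coe_real hlt
  have h₀ := fenchelConj_le_coe_iff.1 ((EReal.le_coe_toReal hy₀).trans_eq (by rw [neg_neg]))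
  obtain ⟨s, k, hs, hrk⟩ := hconv.exists_affine_minorant_gt hnb hlsc h₀ hrf
  have hk : ((⟪x, s⟫ + k : ℝ) : EReal) ≤ fenchelConj (fenchelConj f) x :=
    calc ((⟪x, s⟫ + k : ℝ) : EReal) = ((⟪x, s⟫ : ℝ) : EReal) - ((-k : ℝ) : EReal) := by
          rw [← EReal.coe_sub, sub_neg_eq_add]
      _ ≤ ((⟪x, s⟫ : ℝ) : EReal) - fenchelConj f s :=
          EReal.sub_le_sub le_rfl (fenchelConj_le_coe_iff.2 hs)
      _ ≤ fenchelConj (fenchelConj f) x := inner_sub_le_fenchelConj _ x s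
  rw [real_inner_comm] at hk
  exact (hxr.trans (EReal.coe_lt_coe_iff.2 hrk)).not_ge hk

theorem hasSubgradientAt_fenchelConj_comp_adjoint_iff {m : ℕ} (hproper : ∃ x, f x ≠ ⊤)
    (hnb : ∀ x, f x ≠ ⊥) (hconv : ERealConvex f) (hlsc : LowerSemicontinuous f)
    {A : EuclideanSpace ℝ (Fin n) →L[ℝ] EuclideanSpace ℝ (Fin m)}
    (hri : (intrinsicInterior ℝ {x | fenchelConj f x ≠ ⊤} ∩ Set.range A.adjoint).Nonempty)
    (v d : EuclideanSpace ℝ (Fin m)) :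
    HasSubgradientAt (fun w => fenchelConj f (A.adjoint w)) d v ↔
      ∃ x, HasSubgradientAt f (A.adjoint v) x ∧ A x = d := by
  obtain ⟨x₀, hx₀⟩ := hproper
  have hconj_nb := fenchelConj_ne_bot hx₀
  constructor
  · intro hd
    obtain ⟨x, hx, rfl⟩ :=
      (erealConvex_fenchelConj hnb).exists_hasSubgradientAt_of_hasSubgradientAt_comp hconj_nb hri hd
    obtain ⟨_, hy₀, w₀, rfl⟩ := hri
    refine ⟨x, ?_, by rw [ContinuousLinearMap.adjoint_adjoint]⟩
    have := hx.fenchelConj (hx.ne_top (intrinsicInterior_subset hy₀)) (hconj_nb _)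
    rwa [fenchelConj_fenchelConj hconv hnb hlsc (intrinsicInterior_subset hy₀)] at this
  · rintro ⟨x, hx, rfl⟩
    simpa using (hx.fenchelConj (hx.ne_top hx₀) (hnb x)).comp_continuousLinearMap

end FenchelConjugate

/-- Prox characterization of `g = f* ∘ Aᵀ` (BCV / Ryu–Yin Fact): `v = prox_{αg}(u)` iff
there is `x` minimizing `y ↦ f(y) − ⟨u, Ay⟩ + (α/2)‖Ay‖²` with `v = u − αAx`. -/
theorem prox_conjugate_composition {n m : ℕ}
    (f : EuclideanSpace ℝ (Fin n) → EReal)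
    (hproper : ∃ x, f x ≠ ⊤) (hnobot : ∀ x, f x ≠ ⊥)
    (hconv : ∀ x y : EuclideanSpace ℝ (Fin n), ∀ t : ℝ, 0 ≤ t → t ≤ 1 →
      f (t • x + (1 - t) • y) ≤ (t : EReal) * f x + ((1 - t : ℝ) : EReal) * f y)
    (hlsc : LowerSemicontinuous f)
    (A : EuclideanSpace ℝ (Fin n) →L[ℝ] EuclideanSpace ℝ (Fin m))
    (g : EuclideanSpace ℝ (Fin m) → EReal)
    (hg : ∀ u, g u = fenchelConj f ((ContinuousLinearMap.adjoint A) u))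
    (hri : (intrinsicInterior ℝ {x | fenchelConj f x ≠ ⊤} ∩
      Set.range (ContinuousLinearMap.adjoint A)).Nonempty)
    (α : ℝ) (hα : 0 < α) (u v : EuclideanSpace ℝ (Fin m)) :
    (∀ w, g v + ((1 / (2 * α) * ‖v - u‖ ^ 2 : ℝ) : EReal) ≤
        g w + ((1 / (2 * α) * ‖w - u‖ ^ 2 : ℝ) : EReal)) ↔
    (∃ x : EuclideanSpace ℝ (Fin n),
      (∀ y, f x - ((⟪u, A x⟫ : ℝ) : EReal) + ((α / 2 * ‖A x‖ ^ 2 : ℝ) : EReal) ≤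
            f y - ((⟪u, A y⟫ : ℝ) : EReal) + ((α / 2 * ‖A y‖ ^ 2 : ℝ) : EReal)) ∧
      v = u - α • A x) := by
  have hg' : g = fun w => fenchelConj f (A.adjoint w) := funext hg
  have hgconv : ERealConvex g :=
    hg' ▸ (erealConvex_fenchelConj hnobot).comp_linearMap A.adjoint.toLinearMap
  rw [hgconv.forall_add_norm_sub_sq_le_iff hα, hg',
    hasSubgradientAt_fenchelConj_comp_adjoint_iff hproper hnobot hconv hlsc hri]
  refine exists_congr fun x => ?_
  have hv : A x = α⁻¹ • (u - v) ↔ v = u - α • A x := by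
    rw [eq_inv_smul_iff₀ hα.ne']
    constructor <;> intro h <;> rw [h] <;> abel
  rw [ERealConvex.forall_sub_inner_add_norm_sq_le_iff hconv hα.le, hv]
  constructor <;> rintro ⟨hs, rfl⟩ <;> exact ⟨hs, rfl⟩
end

section
/- Let A, B be maximally monotone operators and C a single-valued monotone operator on a Hilbert space, and α > 0. If Z is a fixed point of the Davis–Yin operator D_α = I − J_{αB} + J_{αA} ∘ (2J_{αB} − I − αC ∘ J_{αB}), then T := J_{αB}(Z) satisfies 0 ∈ (A + B + C)(T). -/
open scoped RealInnerProductSpace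

variable {H : Type*} [NormedAddCommGroup H] [InnerProductSpace ℝ H] [CompleteSpace H]

/-- A set-valued operator is monotone. -/
def MonotoneOp (A : H → Set H) : Prop :=
  ∀ x y u v, u ∈ A x → v ∈ A y → 0 ≤ ⟪u - v, x - y⟫

/-- A set-valued operator is maximally monotone. -/
def MaximallyMonotoneOp (A : H → Set H) : Prop :=
  MonotoneOp A ∧ ∀ B : H → Set H, MonotoneOp B → (∀ x, A x ⊆ B x) → A = B

/-- Davis–Yin: a fixed point `Z` of `D_α = I − J_{αB} + J_{αA}∘(2J_{αB} − I − αC∘J_{αB})`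
yields a zero `T = J_{αB}(Z)` of `A + B + C`. -/
theorem davis_yin_fixed_point {H : Type*} [NormedAddCommGroup H] [InnerProductSpace ℝ H]
    [CompleteSpace H]
    (A B : H → Set H) (C : H → H) (α : ℝ) (hα : 0 < α)
    (hA : MaximallyMonotoneOp A) (hB : MaximallyMonotoneOp B)
    (hC : ∀ x y, 0 ≤ ⟪C x - C y, x - y⟫)
    (JA JB : H → H)
    (hJA : ∀ z, α⁻¹ • (z - JA z) ∈ A (JA z))
    (hJB : ∀ z, α⁻¹ • (z - JB z) ∈ B (JB z))
    (Z : H)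
    (hfix : Z - JB Z + JA (2 • JB Z - Z - α • C (JB Z)) = Z) :
    ∃ a ∈ A (JB Z), ∃ b ∈ B (JB Z), a + b + C (JB Z) = 0 := by
  set T := JB Z with hT
  set w := 2 • T - Z - α • C T with hw
  have hfixT : JA w = T := by
    have h2 : Z - T + JA w = Z - T + T := by rw [hfix]; abel
    exact add_left_cancel h2
  have ha : α⁻¹ • (w - T) ∈ A T := by
    have := hJA w
    rwa [hfixT] at this
  refine ⟨_, ha, _, hJB Z, ?_⟩
  have hwT : w - T = (T - Z) - α • C T := by rw [hw]; abel
  rw [hwT, smul_sub, smul_smul, inv_mul_cancel₀ hα.ne', one_smul]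
  have : α⁻¹ • (T - Z) + α⁻¹ • (Z - T) = 0 := by
    rw [← smul_add]; simp
  linear_combination (norm := module) this
end
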